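/- For σ_x, σ_v > 0 and a > 0, with ρ(a) = (1/2)(a²σ_x²/σ_v² + σ_v²/(a²σ_x²)) and J(a) = 2a²σ_x⁴/(a²σ_x²+σ_v²)², the trade-off identity (ρ(a) + 1)·J(a) = σ_x²/σ_v² holds. -/
import Mathlib

/-- Trade-off identity in the Gaussian-input case: `(ρ(a) + 1)·J(a) = σ_x²/σ_v²` where
`ρ(a) = (1/2)(a²σ_x²/σ_v² + σ_v²/(a²σ_x²))` and `J(a) = 2a²σ_x⁴/(a²σ_x²+σ_v²)²`. -/
theorem tradeoff_gaussian (σx σv a : ℝ) (hσx : 0 < σx) (hσv : 0 < σv) (ha : 0 < a) :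
    ((1 / 2) * (a ^ 2 * σx ^ 2 / σv ^ 2 + σv ^ 2 / (a ^ 2 * σx ^ 2)) + 1)
      * (2 * a ^ 2 * σx ^ 4 / (a ^ 2 * σx ^ 2 + σv ^ 2) ^ 2)
      = σx ^ 2 / σv ^ 2 := by
  have h1 : a ^ 2 * σx ^ 2 ≠ 0 := by positivity
  have h2 : σv ^ 2 ≠ 0 := by positivity
  have h3 : a ^ 2 * σx ^ 2 + σv ^ 2 ≠ 0 := by positivity
  field_simp
  ring
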